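/- arXiv:2506.08211 — 2 statements merged into one kernel-verified Lean document; each statement's English description precedes it below -/
import Mathlib

section
/- Let q ∈ ℕ, γ ∈ ℝ, θ ∈ (Fin q → ℝ), φ : ℝ → (Fin q → ℝ), and set y(t) := φ(t) ⬝ᵥ θ. Let χ : ℝ → ℝ, let F : ℝ → Matrix (Fin q) (Fin q) ℝ be invertible-valued with, for every t ∈ ℝ, derivative −γ·F(t)·Φ(t)·F(t) + χ(t)·F(t) at t; let θ̂ : ℝ → (Fin q → ℝ) have, for every t ∈ ℝ, derivative γ·(y(t) − φ(t) ⬝ᵥ θ̂(t)) • (F(t) *ᵥ φ(t)) at t; and let z : ℝ → ℝ have, for every t ∈ ℝ, derivative −χ(t)·z(t) at t, with z(0) = 1. Assume χ is continuous. Then for every t ∈ ℝ, (F(t))⁻¹ *ᵥ (θ̂(t) − θ) = z(t) • ((F(0))⁻¹ *ᵥ (θ̂(0) − θ)); in particular, if F(0) = f₀⁻¹·1 with f₀ > 0, then θ̂(t) − θ = (f₀·z(t)) • (F(t) *ᵥ (θ̂(0) − θ)). -/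
open Matrix MeasureTheory

attribute [local instance] Matrix.normedAddCommGroup Matrix.normedSpace

section Aux

variable {q : ℕ}

lemma aux_hasDerivAt_matrix {M : ℝ → Matrix (Fin q) (Fin q) ℝ}
    {M' : Matrix (Fin q) (Fin q) ℝ} {t : ℝ} :
    HasDerivAt M M' t ↔ ∀ i j, HasDerivAt (fun s => M s i j) (M' i j) t := by
  refine (hasDerivAt_pi (φ := M)).trans ?_
  exact forall_congr' fun i => hasDerivAt_pi

lemma aux_hasDerivAt_mul_mat {A B : ℝ → Matrix (Fin q) (Fin q) ℝ}
    {A' B' : Matrix (Fin q) (Fin q) ℝ} {t : ℝ}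
    (hA : HasDerivAt A A' t) (hB : HasDerivAt B B' t) :
    HasDerivAt (fun s => A s * B s) (A' * B t + A t * B') t := by
  rw [aux_hasDerivAt_matrix] at *
  intro i j
  simp only [Matrix.add_apply, Matrix.mul_apply]
  have := HasDerivAt.fun_sum (u := Finset.univ)
    (fun k _ => ((hA i k).mul (hB k j)))
  refine this.congr_deriv ?_
  simp [Finset.sum_add_distrib]

lemma aux_hasDerivAt_mulVec {M : ℝ → Matrix (Fin q) (Fin q) ℝ} {v : ℝ → Fin q → ℝ}
    {M' : Matrix (Fin q) (Fin q) ℝ} {v' : Fin q → ℝ} {t : ℝ}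
    (hM : HasDerivAt M M' t) (hv : HasDerivAt v v' t) :
    HasDerivAt (fun s => M s *ᵥ v s) (M' *ᵥ v t + M t *ᵥ v') t := by
  rw [aux_hasDerivAt_matrix] at hM
  rw [hasDerivAt_pi] at *
  intro i
  simp only [Matrix.mulVec, dotProduct, Pi.add_apply]
  have := HasDerivAt.fun_sum (u := Finset.univ) (fun k _ => ((hM i k).mul (hv k)))
  refine this.congr_deriv ?_
  simp [Matrix.mulVec, dotProduct, Finset.sum_add_distrib]

lemma aux_differentiableAt_det {M : ℝ → Matrix (Fin q) (Fin q) ℝ} {t : ℝ}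
    (h : ∀ i j, DifferentiableAt ℝ (fun s => M s i j) t) :
    DifferentiableAt ℝ (fun s => (M s).det) t := by
  simp only [Matrix.det_apply']
  exact DifferentiableAt.fun_sum fun σ _ =>
    ((DifferentiableAt.fun_finsetProd fun i _ => h (σ i) i).const_mul _)

lemma aux_differentiableAt_inv_entry {M : ℝ → Matrix (Fin q) (Fin q) ℝ} {t : ℝ}
    (hu : IsUnit (M t))
    (h : ∀ i j, DifferentiableAt ℝ (fun s => M s i j) t) (i j : Fin q) :
    DifferentiableAt ℝ (fun s => (M s)⁻¹ i j) t := by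
  have hne : (M t).det ≠ 0 :=
    isUnit_iff_ne_zero.mp ((Matrix.isUnit_iff_isUnit_det _).mp hu)
  have hd : DifferentiableAt ℝ (fun s => (M s).det) t := aux_differentiableAt_det h
  have hadj : DifferentiableAt ℝ (fun s => (M s).adjugate i j) t := by
    simp only [Matrix.adjugate_apply]
    apply aux_differentiableAt_det
    intro k l
    rcases eq_or_ne k j with rfl | hk
    · simpa [Matrix.updateRow_apply] using differentiableAt_const _
    · simp only [Matrix.updateRow_apply, if_neg hk]
      exact h k l
  have hrw : (fun s => (M s)⁻¹ i j) = fun s => ((M s).det)⁻¹ * (M s).adjugate i j := by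
    funext s
    rw [Matrix.inv_def, Ring.inverse_eq_inv', Matrix.smul_apply, smul_eq_mul]
  rw [hrw]
  exact (hd.inv hne).mul hadj

lemma aux_vecMulVec_mulVec (w v x : Fin q → ℝ) :
    vecMulVec w v *ᵥ x = (v ⬝ᵥ x) • w := by
  funext i
  simp only [Matrix.mulVec, dotProduct, Matrix.vecMulVec_apply, Pi.smul_apply,
    smul_eq_mul, Finset.sum_mul]
  exact Finset.sum_congr rfl fun j _ => by ring

end Aux

/-- Key identity for the LS estimator with forgetting factor:
`F(t)⁻¹θ̃(t) = z(t) F(0)⁻¹ θ̃(0)`; in particular, if `F(0) = (1/f₀)I` with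
`f₀ > 0`, then `θ̃(t) = f₀ z(t) F(t) θ̃(0)`. -/
theorem ls_ff_error_formula
    (q : ℕ) (γ : ℝ) (θ : Fin q → ℝ) (φ : ℝ → Fin q → ℝ)
    (y : ℝ → ℝ) (hy : ∀ t : ℝ, y t = φ t ⬝ᵥ θ)
    (χ : ℝ → ℝ) (hχ : Continuous χ)
    (F : ℝ → Matrix (Fin q) (Fin q) ℝ)
    (hFinv : ∀ t : ℝ, IsUnit (F t))
    (hF : ∀ t : ℝ, HasDerivAt F
      (-(γ • (F t * vecMulVec (φ t) (φ t) * F t)) + χ t • F t) t)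
    (θh : ℝ → Fin q → ℝ)
    (hθh : ∀ t : ℝ, HasDerivAt θh (γ • ((y t - φ t ⬝ᵥ θh t) • (F t *ᵥ φ t))) t)
    (z : ℝ → ℝ) (hz0 : z 0 = 1)
    (hz : ∀ t : ℝ, HasDerivAt z (-(χ t * z t)) t) :
    (∀ t : ℝ, (F t)⁻¹ *ᵥ (θh t - θ) = z t • ((F 0)⁻¹ *ᵥ (θh 0 - θ))) ∧
    (∀ f₀ : ℝ, 0 < f₀ → F 0 = f₀⁻¹ • (1 : Matrix (Fin q) (Fin q) ℝ) →
      ∀ t : ℝ, θh t - θ = (f₀ * z t) • (F t *ᵥ (θh 0 - θ))) := by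
  have hdet : ∀ t, IsUnit (F t).det := fun t =>
    (Matrix.isUnit_iff_isUnit_det _).mp (hFinv t)
  set Φ : ℝ → Matrix (Fin q) (Fin q) ℝ := fun s => vecMulVec (φ s) (φ s) with hΦdef
  set G : ℝ → Matrix (Fin q) (Fin q) ℝ := fun s => (F s)⁻¹ with hGdef
  have hFG : ∀ t, F t * G t = 1 := fun t => Matrix.mul_nonsing_inv _ (hdet t)
  have hGF : ∀ t, G t * F t = 1 := fun t => Matrix.nonsing_inv_mul _ (hdet t)
  have hFent : ∀ t i j, DifferentiableAt ℝ (fun s => F s i j) t := fun t i j =>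
    ((aux_hasDerivAt_matrix.mp (hF t)) i j).differentiableAt
  have hGdiff : ∀ t, DifferentiableAt ℝ G t := by
    intro t
    refine (differentiableAt_pi (Φ := G)).mpr ?_
    intro i
    rw [differentiableAt_pi]
    intro j
    exact aux_differentiableAt_inv_entry (hFinv t) (hFent t) i j
  have hG : ∀ t, HasDerivAt G (deriv G t) t := fun t => (hGdiff t).hasDerivAt
  -- derivative of the inverse
  have key : ∀ t, deriv G t = γ • Φ t - χ t • G t := by
    intro t
    have h1 : HasDerivAt (fun s => F s * G s)
        ((-(γ • (F t * Φ t * F t)) + χ t • F t) * G t + F t * deriv G t) t :=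
      aux_hasDerivAt_mul_mat (hF t) (hG t)
    have h2 : (fun s : ℝ => F s * G s) = fun _ => (1 : Matrix (Fin q) (Fin q) ℝ) :=
      funext fun s => hFG s
    rw [h2] at h1
    have h3 := (hasDerivAt_const t (1 : Matrix (Fin q) (Fin q) ℝ)).unique h1
    -- 0 = A'*G + F*G'
    have h4 : F t * deriv G t = -((-(γ • (F t * Φ t * F t)) + χ t • F t) * G t) := by
      rw [eq_neg_iff_add_eq_zero, add_comm]
      exact h3.symm
    have h5 : deriv G t = G t * (F t * deriv G t) := by
      rw [← Matrix.mul_assoc, hGF, Matrix.one_mul]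
    rw [h4] at h5
    have e1 : (-(γ • (F t * Φ t * F t)) + χ t • F t) * G t
        = -(γ • (F t * Φ t)) + χ t • (1 : Matrix (Fin q) (Fin q) ℝ) := by
      rw [Matrix.add_mul, Matrix.neg_mul, smul_mul_assoc, smul_mul_assoc,
        Matrix.mul_assoc (F t * Φ t) (F t) (G t), hFG, Matrix.mul_one]
    rw [e1] at h5
    rw [h5, neg_add, neg_neg, ← sub_eq_add_neg, Matrix.mul_sub, mul_smul_comm,
      mul_smul_comm, ← Matrix.mul_assoc, hGF, Matrix.one_mul, Matrix.mul_one]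
  -- error dynamics
  set θt : ℝ → Fin q → ℝ := fun s => θh s - θ with hθtdef
  have hθt : ∀ t, HasDerivAt θt (γ • ((y t - φ t ⬝ᵥ θh t) • (F t *ᵥ φ t))) t :=
    fun t => (hθh t).sub_const θ
  set u : ℝ → Fin q → ℝ := fun s => G s *ᵥ θt s with hudef
  have hu : ∀ t, HasDerivAt u (-(χ t) • u t) t := by
    intro t
    have h := aux_hasDerivAt_mulVec (hG t) (hθt t)
    have e2 : deriv G t *ᵥ θt t + G t *ᵥ (γ • ((y t - φ t ⬝ᵥ θh t) • (F t *ᵥ φ t)))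
        = -(χ t) • u t := by
      rw [key t]
      have hGFφ : G t *ᵥ (F t *ᵥ φ t) = φ t := by
        rw [Matrix.mulVec_mulVec, hGF, Matrix.one_mulVec]
      have hyt : y t - φ t ⬝ᵥ θh t = -(φ t ⬝ᵥ θt t) := by
        rw [hy t, hθtdef]
        simp [dotProduct_sub]
      rw [Matrix.sub_mulVec, smul_mulVec, smul_mulVec,
        Matrix.mulVec_smul, Matrix.mulVec_smul, hGFφ, hyt,
        hΦdef]
      rw [aux_vecMulVec_mulVec]
      have : G t *ᵥ θt t = u t := rfl
      rw [this]
      module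
    rw [← e2]
    exact h
  -- integrating factor
  set E : ℝ → ℝ := fun s => Real.exp (∫ r in (0:ℝ)..s, χ r) with hEdef
  have hE : ∀ t, HasDerivAt E (χ t * E t) t := by
    intro t
    have h1 : HasDerivAt (fun s => ∫ r in (0:ℝ)..s, χ r) (χ t) t :=
      intervalIntegral.integral_hasDerivAt_right (hχ.intervalIntegrable _ _)
        (hχ.stronglyMeasurableAtFilter volume (nhds t)) hχ.continuousAt
    simpa [hEdef, mul_comm] using h1.exp
  have hEpos : ∀ t, 0 < E t := fun t => Real.exp_pos _
  have hE0 : E 0 = 1 := by simp [hEdef]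
  -- E • u is constant
  have hw : ∀ s, HasDerivAt (fun r => E r • u r) 0 s := by
    intro s
    have h := (hE s).smul (hu s)
    have : E s • (-(χ s) • u s) + (χ s * E s) • u s = 0 := by
      rw [smul_smul, ← add_smul, show E s * -χ s + χ s * E s = 0 from by ring,
        zero_smul]
    rwa [this] at h
  have hconstu : ∀ t, E t • u t = E 0 • u 0 := by
    intro t
    have hdiff : Differentiable ℝ (fun r => E r • u r) := fun s =>
      (hw s).differentiableAt
    refine is_const_of_fderiv_eq_zero hdiff (fun s => ?_) t 0
    have h0 : (ContinuousLinearMap.toSpanSingleton ℝ (0 : Fin q → ℝ))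
        = (0 : ℝ →L[ℝ] Fin q → ℝ) := by
      ext x
      simp
    have := (hw s).hasFDerivAt.fderiv
    rwa [h0] at this
  -- E * z is constant
  have hwz : ∀ s, HasDerivAt (fun r => E r * z r) 0 s := by
    intro s
    have h := (hE s).mul (hz s)
    have : χ s * E s * z s + E s * -(χ s * z s) = 0 := by ring
    rwa [this] at h
  have hconstz : ∀ t, E t * z t = 1 := by
    intro t
    have hdiff : Differentiable ℝ (fun r => E r * z r) := fun s =>
      (hwz s).differentiableAt
    have := is_const_of_deriv_eq_zero hdiff (fun s => (hwz s).deriv) t 0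
    rw [this, hE0, hz0, one_mul]
  have hzE : ∀ t, z t = (E t)⁻¹ := fun t =>
    eq_inv_of_mul_eq_one_left (by rw [mul_comm]; exact hconstz t)
  -- main identity
  have main : ∀ t, u t = z t • u 0 := by
    intro t
    calc u t = (E t)⁻¹ • (E t • u t) := (inv_smul_smul₀ (hEpos t).ne' _).symm
      _ = (E t)⁻¹ • u 0 := by rw [hconstu t, hE0, one_smul]
      _ = z t • u 0 := by rw [hzE t]
  constructor
  · exact main
  · intro f₀ hf₀ hF0 t
    have hinv0 : (F 0)⁻¹ = f₀ • (1 : Matrix (Fin q) (Fin q) ℝ) := by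
      apply Matrix.inv_eq_right_inv
      rw [hF0, smul_mul_assoc, mul_smul_comm, smul_smul, Matrix.mul_one,
        inv_mul_cancel₀ hf₀.ne', one_smul]
    have h2 : θt t = F t *ᵥ u t := by
      rw [hudef]
      simp only
      rw [Matrix.mulVec_mulVec, hFG, Matrix.one_mulVec]
    rw [show θh t - θ = θt t from rfl, h2, main t]
    have hu0 : u 0 = f₀ • θt 0 := by
      rw [hudef]
      simp only
      rw [show G 0 = (F 0)⁻¹ from rfl, hinv0, smul_mulVec, Matrix.one_mulVec]
    rw [hu0, Matrix.mulVec_smul, Matrix.mulVec_smul, smul_smul, mul_comm]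
end

section
/- Let q ∈ ℕ, γ > 0, f₀ > 0, let φ : ℝ → (Fin q → ℝ) be continuous, let z : ℝ → ℝ satisfy 0 < z(t) ≤ 1 for all t ≥ 0, and let F : ℝ → Matrix (Fin q) (Fin q) ℝ be invertible-valued with F(0) = f₀⁻¹·1, such that the map t ↦ (z(t))⁻¹ • (F(t))⁻¹ has derivative (γ / z(t)) • Φ(t) at every t ≥ 0. Suppose there exist T_c > 0 and ρ > 0 such that ∫₀^{T_c} Φ(τ)dτ − ρ·1 is positive semidefinite. Then for every t ≥ T_c, the matrix (z(t))⁻¹ • (F(t))⁻¹ − f₀·1 is positive definite and the matrix 1 − (f₀·z(t)) • F(t) is invertible. -/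
open Matrix MeasureTheory

attribute [local instance] Matrix.normedAddCommGroup Matrix.normedSpace

section aux

variable {q : ℕ}

/-- The quadratic form `M ↦ x ⬝ᵥ M *ᵥ x` as a continuous linear map. -/
noncomputable def quadCLM (x : Fin q → ℝ) : Matrix (Fin q) (Fin q) ℝ →L[ℝ] ℝ :=
  LinearMap.toContinuousLinearMap
    { toFun := fun M => x ⬝ᵥ M.mulVec x
      map_add' := fun M N => by simp [Matrix.add_mulVec, dotProduct_add]
      map_smul' := fun c M => by simp [Matrix.smul_mulVec, dotProduct_smul] }

lemma quadCLM_apply (x : Fin q → ℝ) (M : Matrix (Fin q) (Fin q) ℝ) :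
    quadCLM x M = x ⬝ᵥ M.mulVec x := rfl

/-- The entry map `M ↦ M i j` as a continuous linear map. -/
noncomputable def entryCLM (i j : Fin q) : Matrix (Fin q) (Fin q) ℝ →L[ℝ] ℝ :=
  LinearMap.toContinuousLinearMap
    { toFun := fun M => M i j
      map_add' := fun M N => rfl
      map_smul' := fun c M => rfl }

lemma entryCLM_apply (i j : Fin q) (M : Matrix (Fin q) (Fin q) ℝ) :
    entryCLM i j M = M i j := rfl

lemma quad_vecMulVec (u x : Fin q → ℝ) :
    x ⬝ᵥ (vecMulVec u u).mulVec x = (u ⬝ᵥ x) ^ 2 := by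
  have h : (vecMulVec u u).mulVec x = (u ⬝ᵥ x) • u := by
    funext j
    simp only [Matrix.mulVec, dotProduct, vecMulVec_apply, Pi.smul_apply, smul_eq_mul,
      Finset.sum_mul]
    exact Finset.sum_congr rfl fun k _ => by ring
  rw [h, dotProduct_smul, smul_eq_mul, dotProduct_comm, sq]

end aux

/-- Under interval excitation, for the LS estimator with forgetting factor
(with `F(0) = (1/f₀)I` and `0 < z ≤ 1`), the matrix `z(t)⁻¹F(t)⁻¹ − f₀ I` is
positive definite and `I − f₀ z(t) F(t)` is invertible for all `t ≥ T_c`. -/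
theorem ls_ff_ie_implies_invertible
    (q : ℕ) (γ f₀ : ℝ) (hγ : 0 < γ) (hf₀ : 0 < f₀)
    (φ : ℝ → Fin q → ℝ) (hφ : Continuous φ)
    (z : ℝ → ℝ) (hz : ∀ t : ℝ, 0 ≤ t → 0 < z t ∧ z t ≤ 1)
    (F : ℝ → Matrix (Fin q) (Fin q) ℝ)
    (hFinv : ∀ t : ℝ, IsUnit (F t))
    (hF0 : F 0 = f₀⁻¹ • (1 : Matrix (Fin q) (Fin q) ℝ))
    (hderiv : ∀ t : ℝ, 0 ≤ t → HasDerivAt (fun s => (z s)⁻¹ • (F s)⁻¹)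
      ((γ / z t) • vecMulVec (φ t) (φ t)) t)
    (Tc ρ : ℝ) (hTc : 0 < Tc) (hρ : 0 < ρ)
    (hIE : ((∫ τ in (0:ℝ)..Tc, vecMulVec (φ τ) (φ τ)) -
        ρ • (1 : Matrix (Fin q) (Fin q) ℝ)).PosSemidef) :
    ∀ t : ℝ, Tc ≤ t →
      ((z t)⁻¹ • (F t)⁻¹ - f₀ • (1 : Matrix (Fin q) (Fin q) ℝ)).PosDef ∧
      IsUnit ((1 : Matrix (Fin q) (Fin q) ℝ) - (f₀ * z t) • F t) := by
  intro t ht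
  have ht0 : (0:ℝ) ≤ t := le_trans hTc.le ht
  have hzt := hz t ht0
  have hz0 := hz 0 le_rfl
  set G : ℝ → Matrix (Fin q) (Fin q) ℝ := fun s => (z s)⁻¹ • (F s)⁻¹ with hGdef
  -- inverse of F 0
  have hF0inv : (F 0)⁻¹ = f₀ • (1 : Matrix (Fin q) (Fin q) ℝ) := by
    apply Matrix.inv_eq_right_inv
    rw [hF0, Matrix.smul_mul, Matrix.mul_smul, smul_smul, one_mul,
      inv_mul_cancel₀ hf₀.ne', one_smul]
  -- continuity of Φ
  have hΦ : Continuous fun s => vecMulVec (φ s) (φ s) := by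
    apply continuous_matrix
    intro i j
    exact ((continuous_apply i).comp hφ).mul ((continuous_apply j).comp hφ)
  -- the symmetry of G t
  have hsym : ∀ i j, G t i j = G t j i := by
    intro i j
    have hd : ∀ s : ℝ, 0 ≤ s → HasDerivAt (fun r => G r i j - G r j i) 0 s := by
      intro s hs
      have h1 : HasDerivAt (fun r => G r i j)
          (((γ / z s) • vecMulVec (φ s) (φ s)) i j) s :=
        (entryCLM i j).hasFDerivAt.comp_hasDerivAt s (hderiv s hs)
      have h2 : HasDerivAt (fun r => G r j i)
          (((γ / z s) • vecMulVec (φ s) (φ s)) j i) s :=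
        (entryCLM j i).hasFDerivAt.comp_hasDerivAt s (hderiv s hs)
      have := h1.sub h2
      convert this using 1
      · rfl
      · rfl
      · rfl
      simp [vecMulVec_apply, mul_comm]
    have hconst := constant_of_has_deriv_right_zero
      (f := fun r => G r i j - G r j i) (a := 0) (b := t)
      (fun s hs => ((hd s hs.1).continuousAt).continuousWithinAt)
      (fun s hs => (hd s hs.1).hasDerivWithinAt)
    have h0 : G 0 i j - G 0 j i = 0 := by
      simp only [hGdef, hF0inv, Matrix.smul_apply, smul_eq_mul]
      rcases eq_or_ne i j with hij | hij
      · subst hij; ring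
      · rw [Matrix.one_apply_ne hij, Matrix.one_apply_ne hij.symm]
        ring
    have h2 : G t i j - G t j i = G 0 i j - G 0 j i := hconst t ⟨ht0, le_refl t⟩
    rw [h0] at h2
    linarith
  -- quadratic form positivity
  have hquad : ∀ x : Fin q → ℝ, x ≠ 0 →
      0 < x ⬝ᵥ ((z t)⁻¹ • (F t)⁻¹ - f₀ • (1 : Matrix (Fin q) (Fin q) ℝ)).mulVec x := by
    intro x hx
    set ψ : ℝ → ℝ := fun s => (φ s ⬝ᵥ x) ^ 2 with hψdef
    have hψc : Continuous ψ := by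
      have : Continuous fun s => φ s ⬝ᵥ x := by
        simp only [dotProduct]
        exact continuous_finset_sum _ fun i _ =>
          ((continuous_apply i).comp hφ).mul continuous_const
      exact this.pow 2
    have hψnn : ∀ s, 0 ≤ ψ s := fun s => sq_nonneg _
    set h : ℝ → ℝ := fun s => quadCLM x (G s) with hhdef
    have hhd : ∀ s : ℝ, 0 ≤ s → HasDerivAt h ((γ / z s) * ψ s) s := by
      intro s hs
      have := (quadCLM x).hasFDerivAt.comp_hasDerivAt s (hderiv s hs)
      convert this using 1
      · rfl
      · rfl
      · rfl
      erw [_root_.map_smul, quadCLM_apply, quad_vecMulVec]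
      simp [hψdef]
    set I : ℝ → ℝ := fun s => ∫ τ in (0:ℝ)..s, ψ τ with hIdef
    have hId : ∀ s : ℝ, HasDerivAt I (ψ s) s := fun s =>
      (hψc.integral_hasStrictDerivAt 0 s).hasDerivAt
    set k : ℝ → ℝ := fun s => h s - γ * I s with hkdef
    have hkd : ∀ s : ℝ, 0 ≤ s →
        HasDerivAt k ((γ / z s) * ψ s - γ * ψ s) s := fun s hs =>
      (hhd s hs).sub ((hId s).const_mul γ)
    -- k is monotone on [0, ∞)
    have hkmono : MonotoneOn k (Set.Ici (0:ℝ)) := by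
      apply monotoneOn_of_hasDerivWithinAt_nonneg (convex_Ici 0)
        (f' := fun s => (γ / z s) * ψ s - γ * ψ s)
      · exact fun s hs => ((hkd s hs).continuousAt).continuousWithinAt
      · intro s hs
        rw [interior_Ici] at hs
        exact ((hkd s (le_of_lt hs)).hasDerivWithinAt)
      · intro s hs
        rw [interior_Ici] at hs
        have hzs := hz s (le_of_lt hs)
        have hγle : γ ≤ γ / z s := by
          rw [le_div_iff₀ hzs.1]
          nlinarith [hγ.le, hzs.2]
        nlinarith [hψnn s, sub_nonneg.2 hγle]
    have hk0 : k 0 ≤ k t := hkmono (Set.self_mem_Ici) (Set.mem_Ici.2 ht0) ht0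
    have hI0 : I 0 = 0 := by simp only [hIdef, intervalIntegral.integral_same]
    -- the integral up to t dominates the integral up to Tc
    have hITc : I Tc ≤ I t := by
      have hadd := intervalIntegral.integral_add_adjacent_intervals (μ := volume)
        (hψc.intervalIntegrable 0 Tc) (hψc.intervalIntegrable Tc t)
      have hpos : 0 ≤ ∫ τ in Tc..t, ψ τ :=
        intervalIntegral.integral_nonneg ht (fun τ _ => hψnn τ)
      simp only [hIdef]
      rw [← hadd]
      linarith
    -- the integral up to Tc equals the quadratic form of the matrix integral
    have hinterchange : I Tc = quadCLM x (∫ τ in (0:ℝ)..Tc, vecMulVec (φ τ) (φ τ)) := by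
      erw [← ContinuousLinearMap.intervalIntegral_comp_comm (quadCLM x)
        (hΦ.intervalIntegrable 0 Tc)]
      simp only [hIdef, hψdef]
      congr 1
      funext τ
      erw [quadCLM_apply, quad_vecMulVec]
    -- lower bound from IE
    have hxx : 0 ≤ x ⬝ᵥ x := Finset.sum_nonneg fun i _ => mul_self_nonneg _
    have hxxpos : 0 < x ⬝ᵥ x := by
      rcases lt_or_eq_of_le hxx with h | h
      · exact h
      · exact absurd (dotProduct_self_eq_zero.1 h.symm) hx
    have hIEx : ρ * (x ⬝ᵥ x) ≤
        x ⬝ᵥ (∫ τ in (0:ℝ)..Tc, vecMulVec (φ τ) (φ τ)).mulVec x := by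
      have := hIE.dotProduct_mulVec_nonneg x
      simp only [star_trivial, Matrix.sub_mulVec, dotProduct_sub,
        Matrix.smul_mulVec, Matrix.one_mulVec, dotProduct_smul, smul_eq_mul] at this
      linarith
    have hITclb : ρ * (x ⬝ᵥ x) ≤ I Tc := by
      rw [hinterchange, quadCLM_apply]; exact hIEx
    -- lower bound on h 0
    have hh0 : f₀ * (x ⬝ᵥ x) ≤ h 0 := by
      have : h 0 = (z 0)⁻¹ * (f₀ * (x ⬝ᵥ x)) := by
        simp only [hhdef, quadCLM_apply, hGdef, hF0inv, smul_smul,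
          Matrix.smul_mulVec, Matrix.one_mulVec, dotProduct_smul, smul_eq_mul]
      rw [this]
      have hinv : 1 ≤ (z 0)⁻¹ := (one_le_inv₀ hz0.1).2 hz0.2
      nlinarith [mul_nonneg hf₀.le hxx]
    -- put it together
    have hfinal : x ⬝ᵥ ((z t)⁻¹ • (F t)⁻¹ -
        f₀ • (1 : Matrix (Fin q) (Fin q) ℝ)).mulVec x
        = h t - f₀ * (x ⬝ᵥ x) := by
      simp only [hhdef, quadCLM_apply, hGdef, Matrix.sub_mulVec, dotProduct_sub,
        Matrix.smul_mulVec, Matrix.one_mulVec, dotProduct_smul, smul_eq_mul]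
    rw [hfinal]
    have hkineq : h 0 - γ * 0 ≤ h t - γ * I t := by
      simpa only [hkdef, hI0] using hk0
    nlinarith [mul_le_mul_of_nonneg_left hITclb hγ.le,
      mul_le_mul_of_nonneg_left hITc hγ.le, mul_pos (mul_pos hγ hρ) hxxpos]
  -- positive definiteness
  have hPD : ((z t)⁻¹ • (F t)⁻¹ - f₀ • (1 : Matrix (Fin q) (Fin q) ℝ)).PosDef := by
    refine Matrix.PosDef.of_dotProduct_mulVec_pos ?_ ?_
    · apply Matrix.ext
      intro i j
      simp only [Matrix.conjTranspose_apply, Matrix.sub_apply, Matrix.smul_apply,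
        star_trivial, smul_eq_mul]
      have hs := hsym i j
      simp only [hGdef, Matrix.smul_apply, smul_eq_mul] at hs
      rw [← hs]
      rcases eq_or_ne i j with hij | hij
      · subst hij; ring
      · rw [Matrix.one_apply_ne hij, Matrix.one_apply_ne hij.symm]
    · intro x hx
      simpa using hquad x hx
  refine ⟨hPD, ?_⟩
  -- invertibility of 1 - (f₀ z t) F t
  have hdet : IsUnit (F t).det := (Matrix.isUnit_iff_isUnit_det _).1 (hFinv t)
  have hFFinv : F t * (F t)⁻¹ = 1 := Matrix.mul_nonsing_inv _ hdet
  have key : (1 : Matrix (Fin q) (Fin q) ℝ) - (f₀ * z t) • F t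
      = (z t • F t) * ((z t)⁻¹ • (F t)⁻¹ - f₀ • (1 : Matrix (Fin q) (Fin q) ℝ)) := by
    rw [Matrix.mul_sub]
    rw [smul_mul_assoc, mul_smul_comm, smul_smul, hFFinv,
      mul_inv_cancel₀ hzt.1.ne', one_smul]
    rw [smul_mul_assoc, mul_smul_comm, smul_smul, Matrix.mul_one, mul_comm (z t) f₀]
  rw [key]
  have hu1 : IsUnit (z t • F t) := by
    rw [Matrix.isUnit_iff_isUnit_det, Matrix.det_smul]
    exact isUnit_iff_ne_zero.2 (mul_ne_zero (pow_ne_zero _ hzt.1.ne')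
      (isUnit_iff_ne_zero.1 hdet))
  exact hu1.mul hPD.isUnit
end
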